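/- In the lattice L₁ = ⟨1⟩ ⊥ 9⟨−1⟩ with basis ℓ, e₀, e₁, …, e₈, the vector e' = ℓ − e₁ is primitive and isotropic, and the quotient lattice e'^⊥/ℤe' is isometric to 8⟨−1⟩, the odd negative-definite lattice ℤ⁸ with Gram matrix −Id. In particular e'^⊥/ℤe' is not isometric to e^⊥/ℤe for e = 3ℓ − (e₀+⋯+e₈), and hence no isometry of L₁ maps e to e'. -/

import Mathlib

/-- The odd unimodular lattice `⟨1⟩ ⊥ 9⟨−1⟩` of signature `(1,9)`: `ℤ¹⁰` with the
diagonal form `diag(1,−1,…,−1)`; coordinate `0` is `ℓ` and coordinate `i+1` is `e_i`. -/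
def formL1 : LinearMap.BilinForm ℤ (Fin 10 → ℤ) :=
  Matrix.toLinearMap₂' ℤ
    (Matrix.diagonal ![1, -1, -1, -1, -1, -1, -1, -1, -1, -1])

def IsPrimitiveVec {L : Type*} [AddCommGroup L] [Module ℤ L] (e : L) : Prop :=
  ∀ (n : ℤ) (x : L), e = n • x → n = 1 ∨ n = -1

/-- `e^⊥ = {x : L | x·e = 0}`. -/
def perpVec {L : Type*} [AddCommGroup L] [Module ℤ L]
    (B : LinearMap.BilinForm ℤ L) (e : L) : Submodule ℤ L :=
  LinearMap.ker (B.flip e)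

/-- The line `ℤe` inside `e^⊥`, for an isotropic vector `e`. -/
def zLine {L : Type*} [AddCommGroup L] [Module ℤ L]
    (B : LinearMap.BilinForm ℤ L) (e : L) (he : B e e = 0) :
    Submodule ℤ (perpVec B e) :=
  Submodule.span ℤ {⟨e, by simpa [perpVec, LinearMap.mem_ker] using he⟩}

/-- The form of `8⟨−1⟩`: `ℤ⁸` with Gram matrix `−Id`. -/
def formNegId (x y : Fin 8 → ℤ) : ℤ := -∑ i, x i * y i

/-- `e = 3ℓ − (e₀ + e₁ + ⋯ + e₈)`. -/
def eVec : Fin 10 → ℤ := ![3, -1, -1, -1, -1, -1, -1, -1, -1, -1]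

/-- `e' = ℓ − e₁`. -/
def e'Vec : Fin 10 → ℤ := ![1, 0, -1, 0, 0, 0, 0, 0, 0, 0]

/-!
`e = 3ℓ − Σ eᵢ` has all coordinates odd in the diagonal basis, so it is characteristic:
`x·x ≡ x·e (mod 2)` for every `x`. Hence `e^⊥`, and with it `e^⊥/ℤe`, is an even lattice.
On the other hand `e₂ ∈ e'^⊥` has norm `−1`, and forgetting the `ℓ`- and `e₁`-coordinates
identifies `e'^⊥/ℤe'` with `8⟨−1⟩`. An isometry `e'^⊥/ℤe' ≅ e^⊥/ℤe`, or an isometry of `L₁`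
taking `e` to `e'`, would carry `e₂` to a vector of odd norm in an even lattice.
-/

section Lattice

variable {L : Type*} [AddCommGroup L] [Module ℤ L] (B : LinearMap.BilinForm ℤ L)

def IsCharacteristic (c : L) : Prop := ∀ x, B x x ≡ B x c [ZMOD 2]

variable {B}

lemma mem_perpVec {e x : L} : x ∈ perpVec B e ↔ B x e = 0 := Iff.rfl

lemma IsCharacteristic.even_of_mem_perpVec {c x : L} (hc : IsCharacteristic B c)
    (hx : x ∈ perpVec B c) : Even (B x x) := by
  have := hc x
  rw [mem_perpVec.1 hx] at this
  exact Int.even_iff.2 this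

lemma not_exists_isometry_map_of_even_of_odd {e e' : L}
    (heven : ∀ x ∈ perpVec B e, Even (B x x)) (hodd : ∃ v ∈ perpVec B e', Odd (B v v)) :
    ¬ ∃ g : L ≃ₗ[ℤ] L, (∀ x y, B (g x) (g y) = B x y) ∧ g e = e' := by
  rintro ⟨g, hg, hge⟩
  obtain ⟨v, hv, hv_odd⟩ := hodd
  have hw : g.symm v ∈ perpVec B e := by
    rw [mem_perpVec, ← hg, g.apply_symm_apply, hge]
    exact hv
  have := heven _ hw
  rw [← hg, g.apply_symm_apply] at this
  exact Int.not_even_iff_odd.2 hv_odd this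

lemma not_exists_quotient_isometry_of_even_of_odd {e e' : L} {he : B e e = 0}
    {he' : B e' e' = 0} {BQ : LinearMap.BilinForm ℤ (perpVec B e ⧸ zLine B e he)}
    {BQ' : LinearMap.BilinForm ℤ (perpVec B e' ⧸ zLine B e' he')}
    (hBQ : ∀ x y : perpVec B e,
      BQ (Submodule.Quotient.mk x) (Submodule.Quotient.mk y) = B x y)
    (hBQ' : ∀ x y : perpVec B e',
      BQ' (Submodule.Quotient.mk x) (Submodule.Quotient.mk y) = B x y)
    (heven : ∀ x ∈ perpVec B e, Even (B x x)) (hodd : ∃ v ∈ perpVec B e', Odd (B v v)) :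
    ¬ ∃ ψ : (perpVec B e' ⧸ zLine B e' he') ≃ₗ[ℤ] (perpVec B e ⧸ zLine B e he),
      ∀ a b, BQ (ψ a) (ψ b) = BQ' a b := by
  rintro ⟨ψ, hψ⟩
  obtain ⟨v, hv, hv_odd⟩ := hodd
  obtain ⟨y, hy⟩ := Submodule.Quotient.mk_surjective _ (ψ (Submodule.Quotient.mk ⟨v, hv⟩))
  have hnorm : B y y = B v v := by
    rw [← hBQ, hy, hψ, hBQ']
  exact Int.not_even_iff_odd.2 (hnorm ▸ hv_odd) (heven y y.2)

end Lattice

lemma isPrimitiveVec_of_apply_eq_one {ι : Type*} {e : ι → ℤ} {i : ι} (hi : e i = 1) :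
    IsPrimitiveVec e := by
  intro n x hx
  have : n * x i = 1 := by simpa [hi] using (congrFun hx i).symm
  exact Int.eq_one_or_neg_one_of_mul_eq_one this

section Diagonal

variable {ι : Type*} [Fintype ι] [DecidableEq ι]

lemma toLinearMap₂'_diagonal_apply (d x y : ι → ℤ) :
    Matrix.toLinearMap₂' ℤ (Matrix.diagonal d) x y = ∑ i, d i * x i * y i := by
  simp only [Matrix.toLinearMap₂'_apply', Matrix.mulVec_diagonal, dotProduct]
  exact Finset.sum_congr rfl fun i _ => by ring

-- `x·c - x·x = ∑ dᵢ xᵢ (cᵢ - xᵢ)`, and `xᵢ (cᵢ - xᵢ)` is even when `cᵢ` is odd.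
lemma isCharacteristic_diagonal_of_odd (d : ι → ℤ) {c : ι → ℤ} (hc : ∀ i, Odd (c i)) :
    IsCharacteristic (Matrix.toLinearMap₂' ℤ (Matrix.diagonal d)) c := by
  intro x
  rw [Int.modEq_iff_dvd, toLinearMap₂'_diagonal_apply, toLinearMap₂'_diagonal_apply,
    ← Finset.sum_sub_distrib]
  refine Finset.dvd_sum fun i _ => ?_
  have hx : Even (x i * (c i - x i)) := by
    rcases Int.even_or_odd (x i) with h | h
    · exact h.mul_right _
    · exact (Int.even_sub.2 (iff_of_false (Int.not_even_iff_odd.2 (hc i))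
        (Int.not_even_iff_odd.2 h))).mul_left _
  rw [show d i * x i * c i - d i * x i * x i = d i * (x i * (c i - x i)) by ring]
  exact hx.two_dvd.mul_left _

end Diagonal

def e₂Vec : Fin 10 → ℤ := ![0, 0, 0, 1, 0, 0, 0, 0, 0, 0]

lemma formL1_apply (x y : Fin 10 → ℤ) :
    formL1 x y = ∑ i, ![1, -1, -1, -1, -1, -1, -1, -1, -1, -1] i * x i * y i :=
  toLinearMap₂'_diagonal_apply _ x y

lemma isCharacteristic_eVec : IsCharacteristic formL1 eVec :=
  isCharacteristic_diagonal_of_odd _ (by decide)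

lemma formL1_eVec_self : formL1 eVec eVec = 0 := by decide

lemma formL1_e'Vec_self : formL1 e'Vec e'Vec = 0 := by decide

lemma formL1_e₂Vec_self : formL1 e₂Vec e₂Vec = -1 := by decide

lemma mem_perpVec_e'Vec {x : Fin 10 → ℤ} : x ∈ perpVec formL1 e'Vec ↔ x 0 = -x 2 := by
  simp [add_eq_zero_iff_eq_neg, mem_perpVec, formL1_apply, Fin.sum_univ_succ, e'Vec]

lemma e₂Vec_mem_perpVec_e'Vec : e₂Vec ∈ perpVec formL1 e'Vec := mem_perpVec_e'Vec.2 rfl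

-- forgets the `ℓ`- and `e₁`-coordinates
def perpE'Proj : perpVec formL1 e'Vec →ₗ[ℤ] (Fin 8 → ℤ) :=
  (LinearMap.funLeft ℤ ℤ ![1, 3, 4, 5, 6, 7, 8, 9]).comp (perpVec formL1 e'Vec).subtype

lemma perpE'Proj_surjective : Function.Surjective perpE'Proj := fun v =>
  ⟨⟨![0, v 0, 0, v 1, v 2, v 3, v 4, v 5, v 6, v 7], mem_perpVec_e'Vec.2 neg_zero.symm⟩,
    funext fun i => by fin_cases i <;> rfl⟩

lemma ker_perpE'Proj : LinearMap.ker perpE'Proj = zLine formL1 e'Vec formL1_e'Vec_self := by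
  refine le_antisymm (fun x hx => ?_) ?_
  · have hx0 := mem_perpVec_e'Vec.1 x.2
    have hx' : ∀ k, x.1 (![1, 3, 4, 5, 6, 7, 8, 9] k) = 0 := fun k => congrFun hx k
    simp only [Fin.forall_fin_succ, Matrix.cons_val_zero, Matrix.cons_val_succ,
      Matrix.cons_val_fin_one, forall_const] at hx'
    refine Submodule.mem_span_singleton.2 ⟨x.1 0, Subtype.ext (funext fun j => ?_)⟩
    change x.1 0 * e'Vec j = x.1 j
    fin_cases j <;> simp [e'Vec, hx0, hx']
  · rw [zLine, Submodule.span_le, Set.singleton_subset_iff]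
    exact funext fun i => by fin_cases i <;> rfl

lemma formL1_eq_formNegId_perpE'Proj (x y : perpVec formL1 e'Vec) :
    formL1 x y = formNegId (perpE'Proj x) (perpE'Proj y) := by
  have hx := mem_perpVec_e'Vec.1 x.2
  have hy := mem_perpVec_e'Vec.1 y.2
  simp only [formL1_apply, formNegId, Fin.sum_univ_succ, Fin.sum_univ_zero, perpE'Proj,
    LinearMap.comp_apply, Submodule.coe_subtype, LinearMap.funLeft_apply, Matrix.cons_val_zero,
    Matrix.cons_val_succ, Fin.succ_zero_eq_one, Fin.succ_one_eq_two, Fin.reduceSucc, hx, hy]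
  ring

noncomputable def perpE'QuotEquiv :
    (perpVec formL1 e'Vec ⧸ zLine formL1 e'Vec formL1_e'Vec_self) ≃ₗ[ℤ] (Fin 8 → ℤ) :=
  (Submodule.quotEquivOfEq _ _ ker_perpE'Proj.symm).trans
    (perpE'Proj.quotKerEquivOfSurjective perpE'Proj_surjective)

/-- In `⟨1⟩ ⊥ 9⟨−1⟩`, the vector `e' = ℓ − e₁` is primitive and
isotropic, `e'^⊥/ℤe'` is isometric to `8⟨−1⟩`; it is not isometric to `e^⊥/ℤe` for
`e = 3ℓ − Σ e_i`, and hence no isometry of the lattice maps `e` to `e'`. -/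
theorem conic_class_not_equivalent :
    IsPrimitiveVec e'Vec ∧
    ∃ (hiso' : formL1 e'Vec e'Vec = 0) (hiso : formL1 eVec eVec = 0),
      (∃ φ : (perpVec formL1 e'Vec ⧸ zLine formL1 e'Vec hiso') ≃ₗ[ℤ] (Fin 8 → ℤ),
        ∀ x y : perpVec formL1 e'Vec,
          formNegId (φ (Submodule.Quotient.mk x)) (φ (Submodule.Quotient.mk y)) =
            formL1 (x : Fin 10 → ℤ) (y : Fin 10 → ℤ)) ∧
      (∀ (BQ' : LinearMap.BilinForm ℤ (perpVec formL1 e'Vec ⧸ zLine formL1 e'Vec hiso'))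
          (BQ : LinearMap.BilinForm ℤ (perpVec formL1 eVec ⧸ zLine formL1 eVec hiso)),
        (∀ x y : perpVec formL1 e'Vec,
          BQ' (Submodule.Quotient.mk x) (Submodule.Quotient.mk y) =
            formL1 (x : Fin 10 → ℤ) (y : Fin 10 → ℤ)) →
        (∀ x y : perpVec formL1 eVec,
          BQ (Submodule.Quotient.mk x) (Submodule.Quotient.mk y) =
            formL1 (x : Fin 10 → ℤ) (y : Fin 10 → ℤ)) →
        ¬ ∃ ψ : (perpVec formL1 e'Vec ⧸ zLine formL1 e'Vec hiso') ≃ₗ[ℤ]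
              (perpVec formL1 eVec ⧸ zLine formL1 eVec hiso),
            ∀ a b, BQ (ψ a) (ψ b) = BQ' a b) ∧
      ¬ ∃ g : (Fin 10 → ℤ) ≃ₗ[ℤ] (Fin 10 → ℤ),
          (∀ x y, formL1 (g x) (g y) = formL1 x y) ∧ g eVec = e'Vec := by
  have hodd : ∃ v ∈ perpVec formL1 e'Vec, Odd (formL1 v v) :=
    ⟨e₂Vec, e₂Vec_mem_perpVec_e'Vec, formL1_e₂Vec_self ▸ odd_neg_one⟩
  have heven : ∀ x ∈ perpVec formL1 eVec, Even (formL1 x x) :=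
    fun _ => isCharacteristic_eVec.even_of_mem_perpVec
  refine ⟨isPrimitiveVec_of_apply_eq_one (i := 0) rfl, formL1_e'Vec_self, formL1_eVec_self,
    ⟨perpE'QuotEquiv, fun x y => (formL1_eq_formNegId_perpE'Proj x y).symm⟩,
    fun _ _ hBQ' hBQ => not_exists_quotient_isometry_of_even_of_odd hBQ hBQ' heven hodd,
    not_exists_isometry_map_of_even_of_odd heven hodd⟩
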